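/- arXiv:1604.05419 — 12 statements merged into one kernel-verified Lean document; each statement's English description precedes it below -/
import Mathlib

section
/- For a binary combinator ⊕ on total preorders over a finite set W of worlds, the 'upper bound' condition (for all S ⊆ W, min(≼₁⊕₂, S) ⊆ min(≼₁, S) ∪ min(≼₂, S)) is equivalent to the condition (⊕SPU+): for all x, y, z ∈ W, if x ≺₁ y and z ≺₂ y then x ≺₁⊕₂ y or z ≺₁⊕₂ y. -/
def Tpo {W : Type*} (R : W → W → Prop) : Prop :=
  (∀ x, R x x) ∧ (∀ x y z, R x y → R y z → R x z) ∧ (∀ x y, R x y ∨ R y x)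

def strictP {W : Type*} (R : W → W → Prop) (x y : W) : Prop := R x y ∧ ¬ R y x

def symmP {W : Type*} (R : W → W → Prop) (x y : W) : Prop := R x y ∧ R y x

def minSet {W : Type*} (R : W → W → Prop) (S : Set W) : Set W := {x | x ∈ S ∧ ∀ y ∈ S, R x y}

def SVariants {W : Type*} (R1 R2 : W → W → Prop) (S : Set W) : Prop :=
  ∀ x y, ((x ∈ S ∧ y ∈ S) ∨ (x ∉ S ∧ y ∉ S)) → (R1 x y ↔ R2 x y)

section

variable {W : Type*}

theorem Tpo.total {R : W → W → Prop} (hR : Tpo R) : Std.Total R := ⟨hR.2.2⟩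

theorem strictP_of_not_rel {R : W → W → Prop} (hR : Std.Total R) {x y : W} (h : ¬ R y x) :
    strictP R x y :=
  ⟨(hR.total x y).resolve_right h, h⟩

theorem notMem_minSet_of_strictP {R : W → W → Prop} {S : Set W} {x y : W} (hy : y ∈ S)
    (h : strictP R y x) : x ∉ minSet R S :=
  fun hx => h.2 (hx.2 y hy)

theorem exists_strictP_of_notMem_minSet {R : W → W → Prop} (hR : Std.Total R) {S : Set W} {x : W}
    (hx : x ∈ S) (h : x ∉ minSet R S) : ∃ y ∈ S, strictP R y x := by
  have hnotall : ¬ ∀ y ∈ S, R x y := fun hall => h ⟨hx, hall⟩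
  push Not at hnotall
  obtain ⟨y, hy, hxy⟩ := hnotall
  exact ⟨y, hy, strictP_of_not_rel hR hxy⟩

theorem minSet_subset_union_iff {R R₁ R₂ : W → W → Prop}
    (hR : Std.Total R) (hR₁ : Std.Total R₁) (hR₂ : Std.Total R₂) :
    (∀ S : Set W, minSet R S ⊆ minSet R₁ S ∪ minSet R₂ S) ↔
      ∀ x y z : W, strictP R₁ x y → strictP R₂ z y → strictP R x y ∨ strictP R z y := by
  constructor
  · intro hub x y z hxy hzy
    have hy₁ : y ∉ minSet R₁ {x, y, z} := notMem_minSet_of_strictP (by simp) hxy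
    have hy₂ : y ∉ minSet R₂ {x, y, z} := notMem_minSet_of_strictP (by simp) hzy
    have hy : y ∉ minSet R {x, y, z} := fun h => (hub _ h).elim hy₁ hy₂
    obtain ⟨w, hw, hwy⟩ := exists_strictP_of_notMem_minSet hR (by simp) hy
    rcases hw with rfl | rfl | rfl
    · exact .inl hwy
    · exact absurd hwy.1 hwy.2
    · exact .inr hwy
  · intro hspu S w hw
    by_contra hw'
    rw [Set.mem_union, not_or] at hw'
    obtain ⟨a, ha, haw⟩ := exists_strictP_of_notMem_minSet hR₁ hw.1 hw'.1
    obtain ⟨b, hb, hbw⟩ := exists_strictP_of_notMem_minSet hR₂ hw.1 hw'.2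
    rcases hspu a w b haw hbw with h | h
    · exact notMem_minSet_of_strictP ha h hw
    · exact notMem_minSet_of_strictP hb h hw

end

theorem stmt0_general {W : Type*}
    (C : (W → W → Prop) → (W → W → Prop) → (W → W → Prop))
    (hC : ∀ R1 R2, Tpo R1 → Tpo R2 → Tpo (C R1 R2)) :
    (∀ R1 R2, Tpo R1 → Tpo R2 →
        ∀ S : Set W, minSet (C R1 R2) S ⊆ minSet R1 S ∪ minSet R2 S)
    ↔ (∀ R1 R2, Tpo R1 → Tpo R2 → ∀ x y z : W, strictP R1 x y → strictP R2 z y →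
        strictP (C R1 R2) x y ∨ strictP (C R1 R2) z y) :=
  forall₂_congr fun R1 R2 => forall₂_congr fun h1 h2 =>
    minSet_subset_union_iff (hC R1 R2 h1 h2).total h1.total h2.total

theorem stmt0 {W : Type*} [Fintype W] [Nonempty W]
    (C : (W → W → Prop) → (W → W → Prop) → (W → W → Prop))
    (hC : ∀ R1 R2, Tpo R1 → Tpo R2 → Tpo (C R1 R2)) :
    (∀ R1 R2, Tpo R1 → Tpo R2 →
        ∀ S : Set W, minSet (C R1 R2) S ⊆ minSet R1 S ∪ minSet R2 S)
    ↔ (∀ R1 R2, Tpo R1 → Tpo R2 → ∀ x y z : W, strictP R1 x y → strictP R2 z y →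
        strictP (C R1 R2) x y ∨ strictP (C R1 R2) z y) :=
  stmt0_general C hC
end

section
/- For a binary combinator ⊕ on total preorders over a finite set W, the 'lower bound' condition (for all S ⊆ W, either min(≼₁, S) ⊆ min(≼₁⊕₂, S) or min(≼₂, S) ⊆ min(≼₁⊕₂, S)) is equivalent to the condition (⊕WPU+): for all x, y, z ∈ W, if x ≼₁ y and z ≼₂ y then x ≼₁⊕₂ y or z ≼₁⊕₂ y. -/
/-!
For the forward direction, apply the lower bound to `S = {x, y, z}`: whichever of `≼₁`, `≼₂` is
used, its minimum on `S` contains `x` or `z`, which is then `⊕`-below `y`. Conversely, if some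
`x ∈ min(≼₁, S)` is not `⊕`-minimal, pick `y₀ ∈ S` strictly `⊕`-below `x`; (⊕WPU+) at `y₀`
forces every `z ∈ min(≼₂, S)` to be `⊕`-below `y₀`, hence `⊕`-below everything `x` is `⊕`-below,
and (⊕WPU+) at each `y ∈ S` then shows `z` is `⊕`-minimal.
-/

section

variable {W : Type*} {R R' R1 R2 : W → W → Prop}

theorem Tpo.mem_minSet_triple (hR : Tpo R) {x y z : W} (h : R x y ∨ R z y) :
    x ∈ minSet R {x, y, z} ∨ z ∈ minSet R {x, y, z} := by
  rcases hR.2.2 x z with hxz | hzx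
  · refine .inl ⟨by simp, ?_⟩
    rintro w (rfl | rfl | rfl)
    · exact hR.1 w
    · exact h.elim id (hR.2.1 _ _ _ hxz)
    · exact hxz
  · refine .inr ⟨by simp, ?_⟩
    rintro w (rfl | rfl | rfl)
    · exact hzx
    · exact h.elim (hR.2.1 _ _ _ hzx) id
    · exact hR.1 w

theorem Tpo.le_or_le_of_minSet_subset (hR' : Tpo R') {x y z : W} (h : R' x y ∨ R' z y)
    (hsub : minSet R' {x, y, z} ⊆ minSet R {x, y, z}) : R x y ∨ R z y :=
  have hy : y ∈ ({x, y, z} : Set W) := by simp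
  (hR'.mem_minSet_triple h).imp (fun hx => (hsub hx).2 y hy) (fun hz => (hsub hz).2 y hy)

theorem minSet_subset_or_of_le_or_le (hR : Tpo R)
    (h : ∀ x y z, R1 x y → R2 z y → R x y ∨ R z y) (S : Set W) :
    minSet R1 S ⊆ minSet R S ∨ minSet R2 S ⊆ minSet R S := by
  rw [or_iff_not_imp_left, Set.not_subset]
  rintro ⟨x, hx, hxR⟩ z hz
  obtain ⟨y₀, hy₀, hxy₀⟩ : ∃ y₀ ∈ S, ¬ R x y₀ := by simpa [minSet, hx.1] using hxR
  have hzy₀ : R z y₀ := (h x y₀ z (hx.2 y₀ hy₀) (hz.2 y₀ hy₀)).resolve_left hxy₀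
  have hzx : R z x := hR.2.1 _ _ _ hzy₀ ((hR.2.2 x y₀).resolve_left hxy₀)
  refine ⟨hz.1, fun y hy => ?_⟩
  exact (h x y z (hx.2 y hy) (hz.2 y hy)).elim (hR.2.1 _ _ _ hzx) id

end

theorem stmt1_general {W : Type*}
    (C : (W → W → Prop) → (W → W → Prop) → (W → W → Prop))
    (hC : ∀ R1 R2, Tpo R1 → Tpo R2 → Tpo (C R1 R2)) :
    (∀ R1 R2, Tpo R1 → Tpo R2 →
        ∀ S : Set W, minSet R1 S ⊆ minSet (C R1 R2) S ∨ minSet R2 S ⊆ minSet (C R1 R2) S)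
    ↔ (∀ R1 R2, Tpo R1 → Tpo R2 → ∀ x y z : W, R1 x y → R2 z y →
        C R1 R2 x y ∨ C R1 R2 z y) := by
  constructor
  · intro h R1 R2 h1 h2 x y z hxy hzy
    rcases h R1 R2 h1 h2 {x, y, z} with hsub | hsub
    · exact h1.le_or_le_of_minSet_subset (.inl hxy) hsub
    · exact h2.le_or_le_of_minSet_subset (.inr hzy) hsub
  · intro h R1 R2 h1 h2
    exact minSet_subset_or_of_le_or_le (hC R1 R2 h1 h2) (h R1 R2 h1 h2)

theorem stmt1 {W : Type*} [Fintype W] [Nonempty W]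
    (C : (W → W → Prop) → (W → W → Prop) → (W → W → Prop))
    (hC : ∀ R1 R2, Tpo R1 → Tpo R2 → Tpo (C R1 R2)) :
    (∀ R1 R2, Tpo R1 → Tpo R2 →
        ∀ S : Set W, minSet R1 S ⊆ minSet (C R1 R2) S ∨ minSet R2 S ⊆ minSet (C R1 R2) S)
    ↔ (∀ R1 R2, Tpo R1 → Tpo R2 → ∀ x y z : W, R1 x y → R2 z y →
        C R1 R2 x y ∨ C R1 R2 z y) :=
  stmt1_general C hC
end

section
/- If two total preorders ≼₁, ≼₂ on a finite set W are S-variants for some S ⊆ W (i.e., they agree on all pairs from S × S and on all pairs from Sᶜ × Sᶜ), then there exist no x, y₁, y₂ ∈ W with y₁ ≺₁ x ≼₁ y₂ and y₂ ≺₂ x ≼₂ y₁. -/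
section

variable {W : Type*}

theorem Tpo.trans {R : W → W → Prop} (h : Tpo R) {a b c : W} (hab : R a b) (hbc : R b c) :
    R a c :=
  h.2.1 a b c hab hbc

theorem Tpo.strictP_of_strictP_of_le {R : W → W → Prop} (h : Tpo R) {a b c : W}
    (hab : strictP R a b) (hbc : R b c) : strictP R a c :=
  ⟨h.trans hab.1 hbc, fun hca => hab.2 (h.trans hbc hca)⟩

theorem SVariants.iff_of_mem_iff {R1 R2 : W → W → Prop} {S : Set W} (h : SVariants R1 R2 S)
    {x y : W} (hxy : x ∈ S ↔ y ∈ S) : R1 x y ↔ R2 x y :=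
  h x y (by tauto)

theorem SVariants.not_mem_iff_of_not_iff {R1 R2 : W → W → Prop} {S : Set W}
    (h : SVariants R1 R2 S) {x y : W} (hxy : ¬ (R1 x y ↔ R2 x y)) : ¬ (x ∈ S ↔ y ∈ S) :=
  fun hS => hxy (h.iff_of_mem_iff hS)

end

theorem stmt2_general {W : Type*} (R1 R2 : W → W → Prop)
    (h1 : Tpo R1) (h2 : Tpo R2) (S : Set W) (hvar : SVariants R1 R2 S) :
    ¬ ∃ x y1 y2 : W, strictP R1 y1 x ∧ R1 x y2 ∧ strictP R2 y2 x ∧ R2 x y1 := by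
  rintro ⟨x, y1, y2, hy1x, hxy2, hy2x, hxy1⟩
  have hx_y1 : ¬ (x ∈ S ↔ y1 ∈ S) :=
    hvar.not_mem_iff_of_not_iff fun h => hy1x.2 (h.mpr hxy1)
  have hx_y2 : ¬ (x ∈ S ↔ y2 ∈ S) :=
    hvar.not_mem_iff_of_not_iff fun h => hy2x.2 (h.mp hxy2)
  have hy1_y2 : y1 ∈ S ↔ y2 ∈ S := by tauto
  have h12 : strictP R1 y1 y2 := h1.strictP_of_strictP_of_le hy1x hxy2
  have h21 : strictP R2 y2 y1 := h2.strictP_of_strictP_of_le hy2x hxy1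
  exact h21.2 ((hvar.iff_of_mem_iff hy1_y2).mp h12.1)

theorem stmt2 {W : Type*} [Fintype W] (R1 R2 : W → W → Prop)
    (h1 : Tpo R1) (h2 : Tpo R2) (S : Set W) (hvar : SVariants R1 R2 S) :
    ¬ ∃ x y1 y2 : W, strictP R1 y1 x ∧ R1 x y2 ∧ strictP R2 y2 x ∧ R2 x y1 :=
  stmt2_general R1 R2 h1 h2 S hvar
end

section
/- Let ⊕ be a combinator on pairs of total preorders over finite W whose domain is restricted to pairs that are S-variants for some S ⊆ W. Then ⊕ satisfies the weak Pareto condition (⊕SPU: x ≺₁ y and x ≺₂ y imply x ≺₁⊕₂ y) if and only if it satisfies the stronger condition (⊕SPU+: x ≺₁ y and z ≺₂ y imply x ≺₁⊕₂ y or z ≺₁⊕₂ y). -/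
section

variable {W : Type*} {R R1 R2 : W → W → Prop} {S : Set W} {x y z : W}

theorem strictP_of_rel_of_strictP (htrans : ∀ a b c, R a b → R b c → R a c) (hxy : R x y)
    (hyz : strictP R y z) : strictP R x z :=
  ⟨htrans _ _ _ hxy hyz.1, fun hzx => hyz.2 (htrans _ _ _ hzx hxy)⟩

theorem SVariants.rel_iff (hS : SVariants R1 R2 S) (hxy : x ∈ S ↔ y ∈ S) :
    R1 x y ↔ R2 x y :=
  hS x y (by tauto)

theorem SVariants.strictP_iff (hS : SVariants R1 R2 S) (hxy : x ∈ S ↔ y ∈ S) :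
    strictP R1 x y ↔ strictP R2 x y := by
  unfold strictP
  rw [hS.rel_iff hxy, hS.rel_iff hxy.symm]

theorem SVariants.strictP_both_or_strictP_both (hS : SVariants R1 R2 S) (h1 : Tpo R1)
    (h2 : ∀ a b c, R2 a b → R2 b c → R2 a c) (hxy : strictP R1 x y) (hzy : strictP R2 z y) :
    (strictP R1 x y ∧ strictP R2 x y) ∨ (strictP R1 z y ∧ strictP R2 z y) := by
  by_cases hxS : x ∈ S ↔ y ∈ S
  · exact .inl ⟨hxy, (hS.strictP_iff hxS).mp hxy⟩
  by_cases hzS : z ∈ S ↔ y ∈ S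
  · exact .inr ⟨(hS.strictP_iff hzS).mpr hzy, hzy⟩
  have hxz : x ∈ S ↔ z ∈ S := by tauto
  rcases h1.2.2 x z with hxz1 | hzx1
  · exact .inl ⟨hxy, strictP_of_rel_of_strictP h2 ((hS.rel_iff hxz).mp hxz1) hzy⟩
  · exact .inr ⟨strictP_of_rel_of_strictP h1.2.1 hzx1 hxy, hzy⟩

end

theorem stmt3_general {W : Type*}
    (C : (W → W → Prop) → (W → W → Prop) → (W → W → Prop)) :
    (∀ R1 R2, Tpo R1 → Tpo R2 → (∃ S : Set W, SVariants R1 R2 S) →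
        ∀ x y : W, strictP R1 x y → strictP R2 x y → strictP (C R1 R2) x y)
    ↔ (∀ R1 R2, Tpo R1 → Tpo R2 → (∃ S : Set W, SVariants R1 R2 S) →
        ∀ x y z : W, strictP R1 x y → strictP R2 z y →
          strictP (C R1 R2) x y ∨ strictP (C R1 R2) z y) := by
  constructor
  · intro hweak R1 R2 h1 h2 hvar x y z hxy hzy
    obtain ⟨S, hS⟩ := hvar
    exact (hS.strictP_both_or_strictP_both h1 h2.2.1 hxy hzy).imp
      (fun h => hweak R1 R2 h1 h2 ⟨S, hS⟩ x y h.1 h.2)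
      (fun h => hweak R1 R2 h1 h2 ⟨S, hS⟩ z y h.1 h.2)
  · intro hstrong R1 R2 h1 h2 hvar x y hxy1 hxy2
    exact (hstrong R1 R2 h1 h2 hvar x y x hxy1 hxy2).elim id id

theorem stmt3 {W : Type*} [Fintype W]
    (C : (W → W → Prop) → (W → W → Prop) → (W → W → Prop))
    (hC : ∀ R1 R2, Tpo R1 → Tpo R2 → Tpo (C R1 R2)) :
    (∀ R1 R2, Tpo R1 → Tpo R2 → (∃ S : Set W, SVariants R1 R2 S) →
        ∀ x y : W, strictP R1 x y → strictP R2 x y → strictP (C R1 R2) x y)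
    ↔ (∀ R1 R2, Tpo R1 → Tpo R2 → (∃ S : Set W, SVariants R1 R2 S) →
        ∀ x y z : W, strictP R1 x y → strictP R2 z y →
          strictP (C R1 R2) x y ∨ strictP (C R1 R2) z y) :=
  stmt3_general C
end

section
/- For a combinator ⊕ on total preorders over finite W, the weak lower bound condition (⊕WLB: for all S ⊆ W, min(≼₁, S) ∩ min(≼₂, S) ⊆ min(≼₁⊕₂, S)) is equivalent to (⊕WPU: for all x, y, if x ≼₁ y and x ≼₂ y then x ≼₁⊕₂ y). -/
theorem mem_minSet_pair_iff {W : Type*} {R : W → W → Prop} (hR : ∀ z, R z z) {x y : W} :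
    x ∈ minSet R {x, y} ↔ R x y := by
  refine ⟨fun hx => hx.2 y (Set.mem_insert_of_mem x rfl), fun hxy => ⟨Set.mem_insert x {y}, ?_⟩⟩
  rintro z (rfl | rfl)
  exacts [hR z, hxy]

theorem minSet_inter_subset_iff {W : Type*} {R1 R2 R : W → W → Prop}
    (h1 : ∀ z, R1 z z) (h2 : ∀ z, R2 z z) :
    (∀ S : Set W, minSet R1 S ∩ minSet R2 S ⊆ minSet R S) ↔
      ∀ x y, R1 x y → R2 x y → R x y := by
  constructor
  · intro h x y hxy1 hxy2
    have hx := h {x, y} ⟨(mem_minSet_pair_iff h1).2 hxy1, (mem_minSet_pair_iff h2).2 hxy2⟩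
    exact hx.2 y (Set.mem_insert_of_mem x rfl)
  · rintro h S x ⟨⟨hxS, hx1⟩, -, hx2⟩
    exact ⟨hxS, fun y hy => h x y (hx1 y hy) (hx2 y hy)⟩

theorem stmt5_general {W : Type*}
    (C : (W → W → Prop) → (W → W → Prop) → (W → W → Prop)) :
    (∀ R1 R2, Tpo R1 → Tpo R2 →
        ∀ S : Set W, minSet R1 S ∩ minSet R2 S ⊆ minSet (C R1 R2) S)
    ↔ (∀ R1 R2, Tpo R1 → Tpo R2 → ∀ x y : W, R1 x y → R2 x y → C R1 R2 x y) :=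
  forall₂_congr fun _ _ => forall₂_congr fun h1 h2 => minSet_inter_subset_iff h1.1 h2.1

theorem stmt5 {W : Type*} [Fintype W]
    (C : (W → W → Prop) → (W → W → Prop) → (W → W → Prop))
    (hC : ∀ R1 R2, Tpo R1 → Tpo R2 → Tpo (C R1 R2)) :
    (∀ R1 R2, Tpo R1 → Tpo R2 →
        ∀ S : Set W, minSet R1 S ∩ minSet R2 S ⊆ minSet (C R1 R2) S)
    ↔ (∀ R1 R2, Tpo R1 → Tpo R2 → ∀ x y : W, R1 x y → R2 x y → C R1 R2 x y) :=
  stmt5_general C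
end

section
/- Let ⊕ be a combinator on total preorders over finite W restricted to S-variant pairs of inputs. If ⊕ satisfies the weak lower bound (for all S ⊆ W, min(≼₁,S) ∩ min(≼₂,S) ⊆ min(≼₁⊕₂,S)), then it satisfies the full lower bound: for all S ⊆ W, either min(≼₁,S) ⊆ min(≼₁⊕₂,S) or min(≼₂,S) ⊆ min(≼₁⊕₂,S). -/
/-! Let `R1, R2` be `T`-variants. Applied to two-element sets, the weak lower bound says that
`C R1 R2` contains `R1` (which agrees with `R2` there) on each side of the partition `T, Tᶜ`.
If neither minimal set contains the other, pick `y ∈ min(R1, S) \ min(R2, S)` and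
`z ∈ min(R2, S) \ min(R1, S)`: all of `min(R1, S)` lies on the side of `y`, all of `min(R2, S)`
on the opposite side, that of `z`. If `y` is `C R1 R2`-below `z`, an element of `min(R1, S)` is
below every element of `S` on its own side directly, and below those on the other side through
`y` and `z`; symmetrically if `z` is below `y`. -/
namespace SVariants

variable {W : Type*} {R1 R2 Q : W → W → Prop} {T S : Set W} {u w : W}

theorem symm (h : SVariants R1 R2 T) : SVariants R2 R1 T :=
  fun x y hxy => (h x y hxy).symm

theorem rel_iff_s6 (h : SVariants R1 R2 T) (huw : u ∈ T ↔ w ∈ T) : R1 u w ↔ R2 u w := by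
  apply h
  by_cases hu : u ∈ T
  · exact Or.inl ⟨hu, huw.mp hu⟩
  · exact Or.inr ⟨hu, mt huw.mpr hu⟩

theorem mem_minSet_left_of_iff (h : SVariants R1 R2 T)
    (htrans : ∀ x y z, R1 x y → R1 y z → R1 x z)
    (hu : u ∈ minSet R1 S) (hw : w ∈ minSet R2 S) (huw : u ∈ T ↔ w ∈ T) :
    w ∈ minSet R1 S :=
  ⟨hw.1, fun s hs => htrans _ _ _ ((h.rel_iff_s6 huw.symm).mpr (hw.2 u hu.1)) (hu.2 s hs)⟩

theorem rel_of_minSet_inter_subset (h : SVariants R1 R2 T) (hrefl1 : ∀ x, R1 x x)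
    (hrefl2 : ∀ x, R2 x x) (hQ : ∀ S, minSet R1 S ∩ minSet R2 S ⊆ minSet Q S)
    (huw : u ∈ T ↔ w ∈ T) (hR1 : R1 u w) : Q u w := by
  have hR2 : R2 u w := (h.rel_iff_s6 huw).mp hR1
  have hmin : u ∈ minSet Q {u, w} := by
    refine hQ {u, w} ⟨⟨Or.inl rfl, ?_⟩, ⟨Or.inl rfl, ?_⟩⟩
    · rintro _ (rfl | rfl)
      exacts [hrefl1 _, hR1]
    · rintro _ (rfl | rfl)
      exacts [hrefl2 _, hR2]
  exact hmin.2 w (Or.inr rfl)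

theorem minSet_subset_minSet_of_rel (h : SVariants R1 R2 T) (hrefl1 : ∀ x, R1 x x)
    (hrefl2 : ∀ x, R2 x x) (htrans1 : ∀ x y z, R1 x y → R1 y z → R1 x z)
    (htransQ : ∀ x y z, Q x y → Q y z → Q x z)
    (hQ : ∀ S, minSet R1 S ∩ minSet R2 S ⊆ minSet Q S) {y z : W}
    (hy : y ∈ minSet R1 S) (hz : z ∈ minSet R2 S \ minSet R1 S) (hyz : Q y z) :
    minSet R1 S ⊆ minSet Q S := by
  have hQ_of_R1 {u w : W} : (u ∈ T ↔ w ∈ T) → R1 u w → Q u w :=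
    h.rel_of_minSet_inter_subset hrefl1 hrefl2 hQ
  have opposite_z {a : W} (ha : a ∈ minSet R1 S) : ¬(a ∈ T ↔ z ∈ T) :=
    fun haz => hz.2 (h.mem_minSet_left_of_iff htrans1 ha hz.1 haz)
  intro a ha
  refine ⟨ha.1, fun s hs => ?_⟩
  by_cases has : a ∈ T ↔ s ∈ T
  · exact hQ_of_R1 has (ha.2 s hs)
  · have hay : a ∈ T ↔ y ∈ T := by have := opposite_z hy; have := opposite_z ha; tauto
    have hzs : z ∈ T ↔ s ∈ T := by have := opposite_z ha; tauto
    have hQzs : Q z s := hQ_of_R1 hzs ((h.rel_iff_s6 hzs).mpr (hz.1.2 s hs))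
    exact htransQ _ _ _ (hQ_of_R1 hay (ha.2 y hy.1)) (htransQ _ _ _ hyz hQzs)

end SVariants

theorem stmt6_general {W : Type*}
    (C : (W → W → Prop) → (W → W → Prop) → (W → W → Prop))
    (hC : ∀ R1 R2, Tpo R1 → Tpo R2 → Tpo (C R1 R2))
    (hWLB : ∀ R1 R2, Tpo R1 → Tpo R2 → (∃ S : Set W, SVariants R1 R2 S) →
        ∀ S : Set W, minSet R1 S ∩ minSet R2 S ⊆ minSet (C R1 R2) S) :
    ∀ R1 R2, Tpo R1 → Tpo R2 → (∃ S : Set W, SVariants R1 R2 S) →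
      ∀ S : Set W, minSet R1 S ⊆ minSet (C R1 R2) S ∨ minSet R2 S ⊆ minSet (C R1 R2) S := by
  intro R1 R2 h1 h2 ⟨T, hT⟩ S
  have hC12 := hC R1 R2 h1 h2
  have hW := hWLB R1 R2 h1 h2 ⟨T, hT⟩
  by_cases h12 : minSet R1 S ⊆ minSet R2 S
  · exact Or.inl fun x hx => hW S ⟨hx, h12 hx⟩
  by_cases h21 : minSet R2 S ⊆ minSet R1 S
  · exact Or.inr fun x hx => hW S ⟨h21 hx, hx⟩
  obtain ⟨y, hy⟩ := Set.not_subset.mp h12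
  obtain ⟨z, hz⟩ := Set.not_subset.mp h21
  rcases hC12.2.2 y z with hyz | hzy
  · exact Or.inl <| hT.minSet_subset_minSet_of_rel h1.1 h2.1 h1.2.1 hC12.2.1 hW hy.1 hz hyz
  · exact Or.inr <| hT.symm.minSet_subset_minSet_of_rel h2.1 h1.1 h2.2.1
      hC12.2.1 (fun S => Set.inter_comm (minSet R2 S) _ ▸ hW S) hz.1 hy hzy

theorem stmt6 {W : Type*} [Fintype W]
    (C : (W → W → Prop) → (W → W → Prop) → (W → W → Prop))
    (hC : ∀ R1 R2, Tpo R1 → Tpo R2 → Tpo (C R1 R2))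
    (hWLB : ∀ R1 R2, Tpo R1 → Tpo R2 → (∃ S : Set W, SVariants R1 R2 S) →
        ∀ S : Set W, minSet R1 S ∩ minSet R2 S ⊆ minSet (C R1 R2) S) :
    ∀ R1 R2, Tpo R1 → Tpo R2 → (∃ S : Set W, SVariants R1 R2 S) →
      ∀ S : Set W, minSet R1 S ⊆ minSet (C R1 R2) S ∨ minSet R2 S ⊆ minSet (C R1 R2) S :=
  stmt6_general C hC hWLB
end

section
/- Let ⊕ be a combinator on total preorders over finite W satisfying the trifurcation property (for all S ⊆ W, min(≼₁⊕₂, S) equals min(≼₁, S), min(≼₂, S), or their union). Then ⊕ satisfies ⊕SPU+ (if x ≺₁ y and z ≺₂ y then x ≺₁⊕₂ y or z ≺₁⊕₂ y), ⊕WPU+ (if x ≼₁ y and z ≼₂ y then x ≼₁⊕₂ y or z ≼₁⊕₂ y), and the no-overtaking property ⊕NO (for i ≠ j in {1,2}, if x ≺ᵢ y and z ≼ⱼ y then x ≺₁⊕₂ y or z ≼₁⊕₂ y). -/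
def IsTrifurcation {W : Type*} (R1 R2 Q : W → W → Prop) : Prop :=
  ∀ S : Set W, minSet Q S = minSet R1 S ∨ minSet Q S = minSet R2 S ∨
    minSet Q S = minSet R1 S ∪ minSet R2 S

section

variable {W : Type*} {R R1 R2 Q : W → W → Prop} {S : Set W} {x y z : W}

theorem not_mem_minSet_of_strictP (hx : x ∈ S) (hxy : strictP R x y) : y ∉ minSet R S :=
  fun hy => hxy.2 (hy.2 x hx)

theorem mem_minSet_of_mem_minSet_of_le (htrans : ∀ a b c, R a b → R b c → R a c)
    (hy : y ∈ minSet R S) (hx : x ∈ S) (hxy : R x y) : x ∈ minSet R S :=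
  ⟨hx, fun u hu => htrans x y u hxy (hy.2 u hu)⟩

theorem strictP_or_strictP_of_not_mem_minSet (htot : ∀ a b, Q a b ∨ Q b a)
    (hy : y ∉ minSet Q {x, y, z}) : strictP Q x y ∨ strictP Q z y := by
  simp only [minSet, Set.mem_ofPred_eq, Set.mem_insert_iff, Set.mem_singleton_iff,
    forall_eq_or_imp, forall_eq, true_or, or_true, true_and, not_and_or] at hy
  have hyy : Q y y := or_self_iff.mp (htot y y)
  rcases hy with hxy | hyy' | hzy
  · exact .inl ⟨(htot x y).resolve_right hxy, hxy⟩
  · exact absurd hyy hyy'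
  · exact .inr ⟨(htot z y).resolve_right hzy, hzy⟩

namespace IsTrifurcation

theorem symm (h : IsTrifurcation R1 R2 Q) : IsTrifurcation R2 R1 Q := fun S => by
  rcases h S with h | h | h
  · exact .inr (.inl h)
  · exact .inl h
  · exact .inr (.inr (h.trans (Set.union_comm _ _)))

theorem exists_of_mem_minSet (h : IsTrifurcation R1 R2 Q) (hy : y ∈ minSet Q S) :
    (y ∈ minSet R1 S ∧ minSet R1 S ⊆ minSet Q S) ∨
      (y ∈ minSet R2 S ∧ minSet R2 S ⊆ minSet Q S) := by
  rcases h S with h | h | h <;> rw [h] at hy ⊢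
  · exact .inl ⟨hy, subset_rfl⟩
  · exact .inr ⟨hy, subset_rfl⟩
  · exact hy.imp (⟨·, Set.subset_union_left⟩) (⟨·, Set.subset_union_right⟩)

theorem strictP_or_strictP (h : IsTrifurcation R1 R2 Q) (htot : ∀ a b, Q a b ∨ Q b a)
    (hxy : strictP R1 x y) (hzy : strictP R2 z y) : strictP Q x y ∨ strictP Q z y := by
  refine strictP_or_strictP_of_not_mem_minSet htot fun hy => ?_
  rcases h.exists_of_mem_minSet hy with ⟨hy1, -⟩ | ⟨hy2, -⟩
  · exact not_mem_minSet_of_strictP (by simp) hxy hy1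
  · exact not_mem_minSet_of_strictP (by simp) hzy hy2

theorem le_or_le (h : IsTrifurcation R1 R2 Q) (htot : ∀ a b, Q a b ∨ Q b a)
    (htrans1 : ∀ a b c, R1 a b → R1 b c → R1 a c) (htrans2 : ∀ a b c, R2 a b → R2 b c → R2 a c)
    (hxy : R1 x y) (hzy : R2 z y) : Q x y ∨ Q z y := by
  by_cases hy : y ∈ minSet Q {x, y, z}
  · rcases h.exists_of_mem_minSet hy with ⟨hy1, hsub⟩ | ⟨hy2, hsub⟩
    · exact .inl ((hsub (mem_minSet_of_mem_minSet_of_le htrans1 hy1 (by simp) hxy)).2 y (by simp))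
    · exact .inr ((hsub (mem_minSet_of_mem_minSet_of_le htrans2 hy2 (by simp) hzy)).2 y (by simp))
  · exact (strictP_or_strictP_of_not_mem_minSet htot hy).imp And.left And.left

theorem strictP_or_le (h : IsTrifurcation R1 R2 Q) (htot : ∀ a b, Q a b ∨ Q b a)
    (htrans2 : ∀ a b c, R2 a b → R2 b c → R2 a c)
    (hxy : strictP R1 x y) (hzy : R2 z y) : strictP Q x y ∨ Q z y := by
  by_cases hy : y ∈ minSet Q {x, y, z}
  · rcases h.exists_of_mem_minSet hy with ⟨hy1, -⟩ | ⟨hy2, hsub⟩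
    · exact absurd hy1 (not_mem_minSet_of_strictP (by simp) hxy)
    · exact .inr ((hsub (mem_minSet_of_mem_minSet_of_le htrans2 hy2 (by simp) hzy)).2 y (by simp))
  · exact (strictP_or_strictP_of_not_mem_minSet htot hy).imp_right And.left

end IsTrifurcation

end

theorem stmt7_general {W : Type*}
    (C : (W → W → Prop) → (W → W → Prop) → (W → W → Prop))
    (hC : ∀ R1 R2, Tpo R1 → Tpo R2 → Tpo (C R1 R2))
    (hTRI : ∀ R1 R2, Tpo R1 → Tpo R2 → ∀ S : Set W,
        minSet (C R1 R2) S = minSet R1 S ∨ minSet (C R1 R2) S = minSet R2 S ∨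
          minSet (C R1 R2) S = minSet R1 S ∪ minSet R2 S) :
    ∀ R1 R2, Tpo R1 → Tpo R2 →
      (∀ x y z : W, strictP R1 x y → strictP R2 z y →
        strictP (C R1 R2) x y ∨ strictP (C R1 R2) z y) ∧
      (∀ x y z : W, R1 x y → R2 z y → C R1 R2 x y ∨ C R1 R2 z y) ∧
      (∀ x y z : W, strictP R1 x y → R2 z y → strictP (C R1 R2) x y ∨ C R1 R2 z y) ∧
      (∀ x y z : W, strictP R2 x y → R1 z y → strictP (C R1 R2) x y ∨ C R1 R2 z y) := by
  intro R1 R2 h1 h2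
  have htri : IsTrifurcation R1 R2 (C R1 R2) := hTRI R1 R2 h1 h2
  have htot : ∀ a b, C R1 R2 a b ∨ C R1 R2 b a := (hC R1 R2 h1 h2).2.2
  exact ⟨fun _ _ _ => htri.strictP_or_strictP htot,
    fun _ _ _ => htri.le_or_le htot h1.2.1 h2.2.1,
    fun _ _ _ => htri.strictP_or_le htot h2.2.1,
    fun _ _ _ => htri.symm.strictP_or_le htot h1.2.1⟩

theorem stmt7 {W : Type*} [Fintype W] [Nonempty W]
    (C : (W → W → Prop) → (W → W → Prop) → (W → W → Prop))
    (hC : ∀ R1 R2, Tpo R1 → Tpo R2 → Tpo (C R1 R2))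
    (hTRI : ∀ R1 R2, Tpo R1 → Tpo R2 → ∀ S : Set W,
        minSet (C R1 R2) S = minSet R1 S ∨ minSet (C R1 R2) S = minSet R2 S ∨
          minSet (C R1 R2) S = minSet R1 S ∪ minSet R2 S) :
    ∀ R1 R2, Tpo R1 → Tpo R2 →
      (∀ x y z : W, strictP R1 x y → strictP R2 z y →
        strictP (C R1 R2) x y ∨ strictP (C R1 R2) z y) ∧
      (∀ x y z : W, R1 x y → R2 z y → C R1 R2 x y ∨ C R1 R2 z y) ∧
      (∀ x y z : W, strictP R1 x y → R2 z y → strictP (C R1 R2) x y ∨ C R1 R2 z y) ∧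
      (∀ x y z : W, strictP R2 x y → R1 z y → strictP (C R1 R2) x y ∨ C R1 R2 z y) :=
  stmt7_general C hC hTRI
end

section
/- Let ⊕ be a combinator on total preorders over finite W satisfying ⊕SPU+ (if x ≺₁ y and z ≺₂ y then x ≺₁⊕₂ y or z ≺₁⊕₂ y), ⊕WPU+ (if x ≼₁ y and z ≼₂ y then x ≼₁⊕₂ y or z ≼₁⊕₂ y), and ⊕NO (for i ≠ j, if x ≺ᵢ y and z ≼ⱼ y then x ≺₁⊕₂ y or z ≼₁⊕₂ y). Then for every S ⊆ W, min(≼₁⊕₂, S) equals min(≼₁, S), min(≼₂, S), or min(≼₁, S) ∪ min(≼₂, S). -/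
/-! Let `M = min(≼₁⊕₂, S)` and `Mᵢ = min(≼ᵢ, S)`. By ⊕SPU, `M ⊆ M₁ ∪ M₂`: a point strictly
above some element of `M₁` and some element of `M₂` is strictly above one of them in `≼₁⊕₂`.
If some `a ∈ M` lies in `M₁ \ M₂`, then ⊕NO, applied to `a`, a point of `M₂` strictly below it
and any `a' ∈ M₁`, shows `a' ≼₁⊕₂ a`, so `M₁ ⊆ M`; symmetrically for `M₂ \ M₁`. Finally ⊕WPU,
applied to an element of `M` and points of `M₁ \ M` and `M₂ \ M`, shows that `M₁ ⊆ M` or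
`M₂ ⊆ M`. These four inclusions leave only the three possibilities of the theorem. -/

theorem Set.eq_or_eq_or_eq_union_of_subset_union {α : Type*} {M A B : Set α}
    (hM : M ⊆ A ∪ B) (hA : (M ∩ (A \ B)).Nonempty → A ⊆ M)
    (hB : (M ∩ (B \ A)).Nonempty → B ⊆ M) (hAB : A ⊆ M ∨ B ⊆ M) :
    M = A ∨ M = B ∨ M = A ∪ B := by
  have hMA : ¬(M ∩ (B \ A)).Nonempty → M ⊆ A := fun h x hx =>
    (hM hx).elim id fun hxB => by_contra fun hxA => h ⟨x, hx, hxB, hxA⟩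
  have hMB : ¬(M ∩ (A \ B)).Nonempty → M ⊆ B := fun h x hx =>
    (hM hx).elim (fun hxA => by_contra fun hxB => h ⟨x, hx, hxA, hxB⟩) id
  by_cases hA' : (M ∩ (A \ B)).Nonempty <;> by_cases hB' : (M ∩ (B \ A)).Nonempty
  · exact Or.inr <| Or.inr <| hM.antisymm (Set.union_subset (hA hA') (hB hB'))
  · exact Or.inl <| (hMA hB').antisymm (hA hA')
  · exact Or.inr <| Or.inl <| (hMB hA').antisymm (hB hB')
  · exact hAB.imp (hMA hB').antisymm fun h => Or.inl <| (hMB hA').antisymm h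

section

variable {W : Type*} {R R₁ R₂ : W → W → Prop} {S : Set W}

theorem Tpo.minSet_nonempty [Finite W] (hR : Tpo R) (hS : S.Nonempty) :
    (minSet R S).Nonempty := by
  let : Preorder W := { le := R, le_refl := hR.1, le_trans := hR.2.1 }
  obtain ⟨x, hxS, hx⟩ := S.toFinite.exists_minimal hS
  exact ⟨x, hxS, fun y hy => (hR.2.2 x y).elim id fun hyx => hx hy hyx⟩

theorem Tpo.strictP_of_mem_minSet (hR : Tpo R) {w a : W} (hw : w ∈ minSet R S)
    (ha : a ∈ S \ minSet R S) : strictP R w a :=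
  ⟨hw.2 a ha.1, fun haw => ha.2 ⟨ha.1, fun y hy => hR.2.1 a w y haw (hw.2 y hy)⟩⟩

theorem minSet_subset_union [Finite W] (h₁ : Tpo R₁) (h₂ : Tpo R₂) (hS : S.Nonempty)
    (hSPU : ∀ x y z, strictP R₁ x y → strictP R₂ z y → strictP R x y ∨ strictP R z y) :
    minSet R S ⊆ minSet R₁ S ∪ minSet R₂ S := by
  intro y hy
  by_contra hy'
  rw [Set.mem_union, not_or] at hy'
  obtain ⟨x, hx⟩ := h₁.minSet_nonempty hS
  obtain ⟨z, hz⟩ := h₂.minSet_nonempty hS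
  rcases hSPU x y z (h₁.strictP_of_mem_minSet hx ⟨hy.1, hy'.1⟩)
      (h₂.strictP_of_mem_minSet hz ⟨hy.1, hy'.2⟩) with h | h
  · exact h.2 (hy.2 x hx.1)
  · exact h.2 (hy.2 z hz.1)

theorem minSet_subset_of_mem_minSet_diff [Finite W] (hR : Tpo R) (h₂ : Tpo R₂)
    (hS : S.Nonempty)
    (hNO : ∀ x y z, strictP R₂ x y → R₁ z y → strictP R x y ∨ R z y) {a : W}
    (ha : a ∈ minSet R S) (ha' : a ∈ minSet R₁ S \ minSet R₂ S) :
    minSet R₁ S ⊆ minSet R S := by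
  intro b hb
  obtain ⟨x, hx⟩ := h₂.minSet_nonempty hS
  rcases hNO x a b (h₂.strictP_of_mem_minSet hx ⟨ha.1, ha'.2⟩) (hb.2 a ha.1) with h | h
  · exact absurd (ha.2 x hx.1) h.2
  · exact ⟨hb.1, fun y hy => hR.2.1 b a y h (ha.2 y hy)⟩

theorem minSet_subset_or_minSet_subset [Finite W] (hR : Tpo R) (hS : S.Nonempty)
    (hWPU : ∀ x y z, R₁ x y → R₂ z y → R x y ∨ R z y) :
    minSet R₁ S ⊆ minSet R S ∨ minSet R₂ S ⊆ minSet R S := by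
  by_contra h
  simp only [not_or, Set.not_subset] at h
  obtain ⟨⟨a, ha₁, ha⟩, ⟨b, hb₂, hb⟩⟩ := h
  obtain ⟨m, hm⟩ := hR.minSet_nonempty hS
  rcases hWPU a m b (ha₁.2 m hm.1) (hb₂.2 m hm.1) with h | h
  · exact (hR.strictP_of_mem_minSet hm ⟨ha₁.1, ha⟩).2 h
  · exact (hR.strictP_of_mem_minSet hm ⟨hb₂.1, hb⟩).2 h

end

theorem stmt8_general {W : Type*} [Fintype W]
    (C : (W → W → Prop) → (W → W → Prop) → (W → W → Prop))
    (hC : ∀ R1 R2, Tpo R1 → Tpo R2 → Tpo (C R1 R2))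
    (hSPU : ∀ R1 R2, Tpo R1 → Tpo R2 → ∀ x y z : W, strictP R1 x y → strictP R2 z y →
        strictP (C R1 R2) x y ∨ strictP (C R1 R2) z y)
    (hWPU : ∀ R1 R2, Tpo R1 → Tpo R2 → ∀ x y z : W, R1 x y → R2 z y →
        C R1 R2 x y ∨ C R1 R2 z y)
    (hNO1 : ∀ R1 R2, Tpo R1 → Tpo R2 → ∀ x y z : W, strictP R1 x y → R2 z y →
        strictP (C R1 R2) x y ∨ C R1 R2 z y)
    (hNO2 : ∀ R1 R2, Tpo R1 → Tpo R2 → ∀ x y z : W, strictP R2 x y → R1 z y →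
        strictP (C R1 R2) x y ∨ C R1 R2 z y) :
    ∀ R1 R2, Tpo R1 → Tpo R2 → ∀ S : Set W,
      minSet (C R1 R2) S = minSet R1 S ∨ minSet (C R1 R2) S = minSet R2 S ∨
        minSet (C R1 R2) S = minSet R1 S ∪ minSet R2 S := by
  intro R1 R2 h1 h2 S
  rcases S.eq_empty_or_nonempty with rfl | hS
  · simp [minSet]
  have hR := hC R1 R2 h1 h2
  exact Set.eq_or_eq_or_eq_union_of_subset_union
    (minSet_subset_union h1 h2 hS (hSPU R1 R2 h1 h2))
    (fun ⟨_, ha, ha'⟩ => minSet_subset_of_mem_minSet_diff hR h2 hS (hNO2 R1 R2 h1 h2) ha ha')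
    (fun ⟨_, hb, hb'⟩ => minSet_subset_of_mem_minSet_diff hR h1 hS (hNO1 R1 R2 h1 h2) hb hb')
    (minSet_subset_or_minSet_subset hR hS (hWPU R1 R2 h1 h2))

theorem stmt8 {W : Type*} [Fintype W] [Nonempty W]
    (C : (W → W → Prop) → (W → W → Prop) → (W → W → Prop))
    (hC : ∀ R1 R2, Tpo R1 → Tpo R2 → Tpo (C R1 R2))
    (hSPU : ∀ R1 R2, Tpo R1 → Tpo R2 → ∀ x y z : W, strictP R1 x y → strictP R2 z y →
        strictP (C R1 R2) x y ∨ strictP (C R1 R2) z y)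
    (hWPU : ∀ R1 R2, Tpo R1 → Tpo R2 → ∀ x y z : W, R1 x y → R2 z y →
        C R1 R2 x y ∨ C R1 R2 z y)
    (hNO1 : ∀ R1 R2, Tpo R1 → Tpo R2 → ∀ x y z : W, strictP R1 x y → R2 z y →
        strictP (C R1 R2) x y ∨ C R1 R2 z y)
    (hNO2 : ∀ R1 R2, Tpo R1 → Tpo R2 → ∀ x y z : W, strictP R2 x y → R1 z y →
        strictP (C R1 R2) x y ∨ C R1 R2 z y) :
    ∀ R1 R2, Tpo R1 → Tpo R2 → ∀ S : Set W,
      minSet (C R1 R2) S = minSet R1 S ∨ minSet (C R1 R2) S = minSet R2 S ∨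
        minSet (C R1 R2) S = minSet R1 S ∪ minSet R2 S :=
  stmt8_general C hC hSPU hWPU hNO1 hNO2
end

section
/- For a combinator ⊕ on total preorders over finite W, the Parity condition ⊕PAR (if x ≺₁⊕₂ y then for each i ∈ {1,2} there exists z with x ∼₁⊕₂ z and z ≺ᵢ y) is equivalent to the strong-belief condition ⊕SB: for all S ⊆ W, if x ≺₁⊕₂ y for every x ∈ Sᶜ and y ∈ S, then min(≼₁, S) ∪ min(≼₂, S) ⊆ min(≼₁⊕₂, S). -/
namespace Tpo

variable {W : Type*} {R Q : W → W → Prop} {S : Set W} {x y w : W}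

theorem strictP_of_not (hR : Tpo R) (h : ¬ R y x) : strictP R x y :=
  ⟨(hR.2.2 x y).resolve_right h, h⟩

theorem strictP_of_not_le_of_le (hR : Tpo R) (hx : ¬ R w x) (hy : R w y) : strictP R x y :=
  hR.strictP_of_not fun hyx => hx (hR.2.1 _ _ _ hy hyx)

theorem wellFounded_strictP [Finite W] (hR : Tpo R) : WellFounded (strictP R) :=
  haveI : IsTrans W (strictP R) :=
    ⟨fun _ _ _ hab hbc => ⟨hR.2.1 _ _ _ hab.1 hbc.1, fun hca => hbc.2 (hR.2.1 _ _ _ hca hab.1)⟩⟩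
  haveI : Std.Irrefl (strictP R) := ⟨fun _ h => h.2 h.1⟩
  Finite.wellFounded_of_trans_of_irrefl _

theorem minSet_nonempty_s9 [Finite W] (hR : Tpo R) (hS : S.Nonempty) : (minSet R S).Nonempty := by
  obtain ⟨m, hm, hmin⟩ := hR.wellFounded_strictP.has_min S hS
  exact ⟨m, hm, fun y hy => by_contra fun hmy => hmin y hy (hR.strictP_of_not hmy)⟩

theorem mem_minSet_of_parity (hQ : Tpo Q) (hsep : ∀ a ∈ Sᶜ, ∀ b ∈ S, strictP Q a b)
    (hw : w ∈ minSet R S) (hpar : ∀ y, strictP Q y w → ∃ z, symmP Q y z ∧ strictP R z w) :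
    w ∈ minSet Q S := by
  refine ⟨hw.1, fun y hy => by_contra fun hwy => ?_⟩
  obtain ⟨z, hyz, hzw⟩ := hpar y (hQ.strictP_of_not hwy)
  have hzS : z ∉ S := fun hzS => hzw.2 (hw.2 z hzS)
  exact (hsep z hzS y hy).2 hyz.1

theorem exists_symmP_strictP_of_minSet_subset [Finite W] (hR : Tpo R)
    (hsub : minSet R S ⊆ minSet Q S) (hx : x ∈ minSet Q S) (hy : y ∈ S) (hyx : ¬ Q y x) :
    ∃ z, symmP Q x z ∧ strictP R z y := by
  obtain ⟨m, hm⟩ := hR.minSet_nonempty_s9 ⟨x, hx.1⟩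
  have hy_not_min : y ∉ minSet R S := fun hymin => hyx ((hsub hymin).2 x hx.1)
  obtain ⟨v, hv, hyv⟩ : ∃ v ∈ S, ¬ R y v := by
    by_contra! h
    exact hy_not_min ⟨hy, h⟩
  exact ⟨m, ⟨hx.2 m hm.1, (hsub hm).2 x hx.1⟩, hm.2 y hy,
    fun hym => hyv (hR.2.1 _ _ _ hym (hm.2 v hv))⟩

end Tpo

theorem stmt9_general {W : Type*} [Fintype W]
    (C : (W → W → Prop) → (W → W → Prop) → (W → W → Prop))
    (hC : ∀ R1 R2, Tpo R1 → Tpo R2 → Tpo (C R1 R2)) :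
    (∀ R1 R2, Tpo R1 → Tpo R2 → ∀ x y : W, strictP (C R1 R2) x y →
        (∃ z, symmP (C R1 R2) x z ∧ strictP R1 z y) ∧
        (∃ z, symmP (C R1 R2) x z ∧ strictP R2 z y))
    ↔ (∀ R1 R2, Tpo R1 → Tpo R2 → ∀ S : Set W,
        (∀ x ∈ Sᶜ, ∀ y ∈ S, strictP (C R1 R2) x y) →
          minSet R1 S ∪ minSet R2 S ⊆ minSet (C R1 R2) S) := by
  constructor
  · intro hpar R1 R2 h1 h2 S hsep w hw
    have hQ := hC R1 R2 h1 h2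
    rcases hw with hw | hw
    · exact hQ.mem_minSet_of_parity hsep hw fun y hy => (hpar R1 R2 h1 h2 y w hy).1
    · exact hQ.mem_minSet_of_parity hsep hw fun y hy => (hpar R1 R2 h1 h2 y w hy).2
  · intro hsb R1 R2 h1 h2 x y hxy
    have hQ := hC R1 R2 h1 h2
    let S : Set W := {w | C R1 R2 x w}
    have hx : x ∈ minSet (C R1 R2) S := ⟨hQ.1 x, fun _ h => h⟩
    obtain ⟨hsub1, hsub2⟩ := Set.union_subset_iff.mp
      (hsb R1 R2 h1 h2 S fun a ha b hb => hQ.strictP_of_not_le_of_le ha hb)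
    exact ⟨h1.exists_symmP_strictP_of_minSet_subset hsub1 hx hxy.1 hxy.2,
      h2.exists_symmP_strictP_of_minSet_subset hsub2 hx hxy.1 hxy.2⟩

theorem stmt9 {W : Type*} [Fintype W] [Nonempty W]
    (C : (W → W → Prop) → (W → W → Prop) → (W → W → Prop))
    (hC : ∀ R1 R2, Tpo R1 → Tpo R2 → Tpo (C R1 R2)) :
    (∀ R1 R2, Tpo R1 → Tpo R2 → ∀ x y : W, strictP (C R1 R2) x y →
        (∃ z, symmP (C R1 R2) x z ∧ strictP R1 z y) ∧
        (∃ z, symmP (C R1 R2) x z ∧ strictP R2 z y))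
    ↔ (∀ R1 R2, Tpo R1 → Tpo R2 → ∀ S : Set W,
        (∀ x ∈ Sᶜ, ∀ y ∈ S, strictP (C R1 R2) x y) →
          minSet R1 S ∪ minSet R2 S ⊆ minSet (C R1 R2) S) :=
  stmt9_general C hC
end

section
/- For any combinator ⊕ on total preorders over finite W, the conjunction of ⊕SPU+ (x ≺₁ y and z ≺₂ y imply x ≺₁⊕₂ y or z ≺₁⊕₂ y) and ⊕PAR (if x ≺₁⊕₂ y then for each i ∈ {1,2} there exists z with x ∼₁⊕₂ z and z ≺ᵢ y) implies ⊕WPU+ (x ≼₁ y and z ≼₂ y imply x ≼₁⊕₂ y or z ≼₁⊕₂ y). -/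
section

variable {W : Type*} {R R1 R2 : W → W → Prop}

lemma strictP_of_strictP_of_le (htrans : ∀ x y z, R x y → R y z → R x z) {w x y : W}
    (hwx : strictP R w x) (hxy : R x y) : strictP R w y :=
  ⟨htrans _ _ _ hwx.1 hxy, fun hyw => hwx.2 (htrans _ _ _ hxy hyw)⟩

lemma strictP_of_not_le (htotal : ∀ x y, R x y ∨ R y x) {x y : W} (h : ¬ R x y) :
    strictP R y x :=
  ⟨(htotal x y).resolve_left h, h⟩

lemma le_or_le_of_spu_of_par
    (h1 : ∀ x y z, R1 x y → R1 y z → R1 x z) (h2 : ∀ x y z, R2 x y → R2 y z → R2 x z)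
    (htotal : ∀ x y, R x y ∨ R y x)
    (hSPU : ∀ x y z, strictP R1 x y → strictP R2 z y → strictP R x y ∨ strictP R z y)
    (hPAR1 : ∀ x y, strictP R x y → ∃ z, symmP R x z ∧ strictP R1 z y)
    (hPAR2 : ∀ x y, strictP R x y → ∃ z, symmP R x z ∧ strictP R2 z y)
    {x y z : W} (hxy : R1 x y) (hzy : R2 z y) : R x y ∨ R z y := by
  by_contra! ⟨hnx, hnz⟩
  obtain ⟨w, hyw, hwx⟩ := hPAR1 y x (strictP_of_not_le htotal hnx)
  obtain ⟨w', hyw', hw'z⟩ := hPAR2 y z (strictP_of_not_le htotal hnz)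
  rcases hSPU w y w' (strictP_of_strictP_of_le h1 hwx hxy) (strictP_of_strictP_of_le h2 hw'z hzy)
    with hwy | hw'y
  · exact hwy.2 hyw.1
  · exact hw'y.2 hyw'.1

end

theorem stmt10_general {W : Type*}
    (C : (W → W → Prop) → (W → W → Prop) → (W → W → Prop))
    (hC : ∀ R1 R2, Tpo R1 → Tpo R2 → Tpo (C R1 R2))
    (hSPU : ∀ R1 R2, Tpo R1 → Tpo R2 → ∀ x y z : W, strictP R1 x y → strictP R2 z y →
        strictP (C R1 R2) x y ∨ strictP (C R1 R2) z y)
    (hPAR : ∀ R1 R2, Tpo R1 → Tpo R2 → ∀ x y : W, strictP (C R1 R2) x y →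
        (∃ z, symmP (C R1 R2) x z ∧ strictP R1 z y) ∧
        (∃ z, symmP (C R1 R2) x z ∧ strictP R2 z y)) :
    ∀ R1 R2, Tpo R1 → Tpo R2 → ∀ x y z : W, R1 x y → R2 z y →
      C R1 R2 x y ∨ C R1 R2 z y := by
  intro R1 R2 h1 h2 x y z hxy hzy
  exact le_or_le_of_spu_of_par h1.2.1 h2.2.1 (hC R1 R2 h1 h2).2.2 (hSPU R1 R2 h1 h2)
    (fun x y h => (hPAR R1 R2 h1 h2 x y h).1) (fun x y h => (hPAR R1 R2 h1 h2 x y h).2) hxy hzy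

theorem stmt10 {W : Type*} [Fintype W] [Nonempty W]
    (C : (W → W → Prop) → (W → W → Prop) → (W → W → Prop))
    (hC : ∀ R1 R2, Tpo R1 → Tpo R2 → Tpo (C R1 R2))
    (hSPU : ∀ R1 R2, Tpo R1 → Tpo R2 → ∀ x y z : W, strictP R1 x y → strictP R2 z y →
        strictP (C R1 R2) x y ∨ strictP (C R1 R2) z y)
    (hPAR : ∀ R1 R2, Tpo R1 → Tpo R2 → ∀ x y : W, strictP (C R1 R2) x y →
        (∃ z, symmP (C R1 R2) x z ∧ strictP R1 z y) ∧
        (∃ z, symmP (C R1 R2) x z ∧ strictP R2 z y)) :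
    ∀ R1 R2, Tpo R1 → Tpo R2 → ∀ x y z : W, R1 x y → R2 z y →
      C R1 R2 x y ∨ C R1 R2 z y :=
  stmt10_general C hC hSPU hPAR
end

section
/- Assume HI ([Ψ−A] = [Ψ] ∩ [Ψ∗¬A]), the left-to-right half of EHI ([(Ψ−A)∗B] ⊆ [Ψ∗B] ∩ [(Ψ∗¬A)∗B]), syntax-independence AGM∗6 and AGM−3 (if A ∉ [Ψ] then [Ψ−A] = [Ψ]), and AGM∗5 (consistency preservation). Then the vacuity principle holds: if A is consistent and B ∈ [Ψ∗A], then [Ψ] ∩ [Ψ∗A] ⊆ [Ψ∗B]. -/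
/-!
Contract `Ψ` by `¬A`: by HI, and since `¬¬A ≡ A`, the resulting state `Φ` believes exactly
`[Ψ] ∩ [Ψ∗A]`. As `[Ψ∗A]` is consistent and contains `B`, `Φ` does not believe `¬B`, so
contracting `Φ` by `¬B` is vacuous (AGM−3), and HI then gives `[Φ] ⊆ [Φ∗B]`. Finally
`Φ∗B = (Ψ−¬A)∗B`, whose beliefs lie in `[Ψ∗B]` by EHI.
-/

inductive Form where
  | atom : Nat → Form
  | fls : Form
  | impl : Form → Form → Form

def Form.eval (v : Nat → Prop) : Form → Prop
  | .atom n => v n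
  | .fls => False
  | .impl a b => a.eval v → b.eval v

def Form.neg (a : Form) : Form := .impl a .fls
def Form.conj (a b : Form) : Form := Form.neg (a.impl b.neg)
def Form.iff (a b : Form) : Form := (a.impl b).conj (b.impl a)

/-- Classical consequence. -/
def Cn (Γ : Set Form) : Set Form := {φ | ∀ v : Nat → Prop, (∀ ψ ∈ Γ, ψ.eval v) → φ.eval v}

def Consistent (Γ : Set Form) : Prop := ∃ v : Nat → Prop, ∀ ψ ∈ Γ, ψ.eval v

@[simp]
theorem Form.eval_neg (v : Nat → Prop) (A : Form) : A.neg.eval v ↔ ¬A.eval v :=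
  Iff.rfl

theorem Cn_singleton_neg_neg (A : Form) : Cn {A.neg.neg} = Cn {A} := by
  ext φ
  simp [Cn]

theorem Consistent.neg_not_mem {Γ : Set Form} (hΓ : Consistent Γ) {B : Form} (hB : B ∈ Γ) :
    B.neg ∉ Γ := fun hnB =>
  hΓ.elim fun _ hv => hv B.neg hnB (hv B hB)

section BeliefChange

variable {State : Type*} {bel : State → Set Form} {rev con : State → Form → State}

theorem bel_con_neg (hHI : ∀ Ψ A, bel (con Ψ A) = bel Ψ ∩ bel (rev Ψ A.neg))
    (hAGM6 : ∀ Ψ A B, Cn {A} = Cn {B} → bel (rev Ψ A) = bel (rev Ψ B)) (Ψ : State) (A : Form) :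
    bel (con Ψ A.neg) = bel Ψ ∩ bel (rev Ψ A) := by
  rw [hHI, hAGM6 Ψ _ _ (Cn_singleton_neg_neg A)]

theorem bel_subset_bel_rev_of_neg_not_mem
    (hHI : ∀ Ψ A, bel (con Ψ A) = bel Ψ ∩ bel (rev Ψ A.neg))
    (hAGM6 : ∀ Ψ A B, Cn {A} = Cn {B} → bel (rev Ψ A) = bel (rev Ψ B))
    (hAGM3c : ∀ Ψ A, A ∉ bel Ψ → bel (con Ψ A) = bel Ψ) {Ψ : State} {B : Form}
    (hB : B.neg ∉ bel Ψ) : bel Ψ ⊆ bel (rev Ψ B) := by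
  have hvacuous := hAGM3c Ψ B.neg hB
  rw [bel_con_neg hHI hAGM6] at hvacuous
  exact Set.inter_eq_left.mp hvacuous

end BeliefChange

theorem stmt17_general {State : Type*} (bel : State → Set Form)
    (rev con : State → Form → State)
    (hHI : ∀ Ψ A, bel (con Ψ A) = bel Ψ ∩ bel (rev Ψ A.neg))
    (hEHIl : ∀ Ψ A B, bel (rev (con Ψ A) B) ⊆ bel (rev Ψ B) ∩ bel (rev (rev Ψ A.neg) B))
    (hAGM6 : ∀ Ψ A B, Cn {A} = Cn {B} → bel (rev Ψ A) = bel (rev Ψ B))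
    (hAGM3c : ∀ Ψ A, A ∉ bel Ψ → bel (con Ψ A) = bel Ψ)
    (hAGM5 : ∀ Ψ A, Consistent {A} → Consistent (bel (rev Ψ A))) :
    ∀ Ψ A B, Consistent {A} → B ∈ bel (rev Ψ A) →
      bel Ψ ∩ bel (rev Ψ A) ⊆ bel (rev Ψ B) := by
  intro Ψ A B hA hB
  have hΦ : bel (con Ψ A.neg) = bel Ψ ∩ bel (rev Ψ A) := bel_con_neg hHI hAGM6 Ψ A
  have hnB : B.neg ∉ bel (con Ψ A.neg) := by
    rw [hΦ]
    exact fun h => (hAGM5 Ψ A hA).neg_not_mem hB h.2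
  calc bel Ψ ∩ bel (rev Ψ A) = bel (con Ψ A.neg) := hΦ.symm
    _ ⊆ bel (rev (con Ψ A.neg) B) := bel_subset_bel_rev_of_neg_not_mem hHI hAGM6 hAGM3c hnB
    _ ⊆ bel (rev Ψ B) := fun _ hx => (hEHIl Ψ A.neg B hx).1

theorem stmt17 {State : Type*} (bel : State → Set Form)
    (rev con : State → Form → State)
    (hclosed : ∀ Ψ, Cn (bel Ψ) = bel Ψ)
    (hHI : ∀ Ψ A, bel (con Ψ A) = bel Ψ ∩ bel (rev Ψ A.neg))
    (hEHIl : ∀ Ψ A B, bel (rev (con Ψ A) B) ⊆ bel (rev Ψ B) ∩ bel (rev (rev Ψ A.neg) B))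
    (hAGM6 : ∀ Ψ A B, Cn {A} = Cn {B} → bel (rev Ψ A) = bel (rev Ψ B))
    (hAGM3c : ∀ Ψ A, A ∉ bel Ψ → bel (con Ψ A) = bel Ψ)
    (hAGM5 : ∀ Ψ A, Consistent {A} → Consistent (bel (rev Ψ A))) :
    ∀ Ψ A B, Consistent {A} → B ∈ bel (rev Ψ A) →
      bel Ψ ∩ bel (rev Ψ A) ⊆ bel (rev Ψ B) :=
  stmt17_general bel rev con hHI hEHIl hAGM6 hAGM3c hAGM5
end

section
/- There is no belief state Ψ satisfying the vacuity principle (if A is consistent and B ∈ [Ψ∗A] then [Ψ] ∩ [Ψ∗A] ⊆ [Ψ∗B]) together with: [Ψ] = Cn(p ∧ q), [Ψ∗¬p] = Cn(¬p ∧ q), and [Ψ∗(p↔¬q)] = Cn(p↔¬q), where p, q are distinct propositional atoms. -/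
/-!
Revising by `¬p` yields `Cn(¬p ∧ q)`, which contains `p ↔ ¬q`. Vacuity applied to `A = ¬p` and
`B = p ↔ ¬q` then forces `q`, which lies in both `Cn(p ∧ q)` and `Cn(¬p ∧ q)`, into
`Cn(p ↔ ¬q)`; but the valuation making `p` true and `q` false satisfies `p ↔ ¬q`.
-/

namespace Form

variable (v : Nat → Prop) (a b : Form)

@[simp] theorem eval_atom (n : Nat) : (atom n).eval v ↔ v n := Iff.rfl

@[simp] theorem eval_impl : (a.impl b).eval v ↔ (a.eval v → b.eval v) := Iff.rfl

@[simp] theorem eval_neg_s18 : a.neg.eval v ↔ ¬ a.eval v := Iff.rfl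

@[simp] theorem eval_conj : (a.conj b).eval v ↔ a.eval v ∧ b.eval v := by
  simp only [conj, eval_neg_s18, eval_impl]
  tauto

@[simp] theorem eval_iff : (a.iff b).eval v ↔ (a.eval v ↔ b.eval v) := by
  simp only [Form.iff, eval_conj, eval_impl]
  exact iff_iff_implies_and_implies.symm

end Form

open Form

theorem mem_Cn_singleton {φ ψ : Form} : φ ∈ Cn {ψ} ↔ ∀ v, ψ.eval v → φ.eval v := by
  simp [Cn]

theorem consistent_singleton {A : Form} : Consistent {A} ↔ ∃ v, A.eval v := by
  simp [Consistent]

theorem consistent_neg_atom (n : Nat) : Consistent {(atom n).neg} :=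
  consistent_singleton.2 ⟨fun _ => False, by simp⟩

theorem mem_Cn_conj_right (a b : Form) : b ∈ Cn {a.conj b} :=
  mem_Cn_singleton.2 fun _ h => ((eval_conj _ _ _).1 h).2

theorem iff_neg_mem_Cn_neg_conj (a b : Form) : a.iff b.neg ∈ Cn {a.neg.conj b} :=
  mem_Cn_singleton.2 fun v h => by simp only [eval_conj, eval_neg_s18] at h; simp [h.1, h.2]

theorem atom_not_mem_Cn_iff_neg_atom {m n : Nat} (hmn : m ≠ n) :
    atom n ∉ Cn {(atom m).iff (atom n).neg} := fun h =>
  hmn.symm (mem_Cn_singleton.1 h (· = m) (by simp [hmn.symm]))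

theorem stmt18 {State : Type*} (bel : State → Set Form)
    (rev : State → Form → State) (Ψ : State)
    (p q : Form) (hp : p = .atom 0) (hq : q = .atom 1)
    (hVAC : ∀ A B, Consistent {A} → B ∈ bel (rev Ψ A) →
        bel Ψ ∩ bel (rev Ψ A) ⊆ bel (rev Ψ B)) :
    ¬ (bel Ψ = Cn {p.conj q} ∧ bel (rev Ψ p.neg) = Cn {(p.neg).conj q} ∧
        bel (rev Ψ (p.iff q.neg)) = Cn {p.iff q.neg}) := by
  rintro ⟨hΨ, hΨnp, hΨiff⟩
  subst hp hq
  have hiff : (atom 0).iff (atom 1).neg ∈ bel (rev Ψ (atom 0).neg) := by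
    rw [hΨnp]
    exact iff_neg_mem_Cn_neg_conj _ _
  have hq : atom 1 ∈ bel Ψ ∩ bel (rev Ψ (atom 0).neg) := by
    rw [hΨ, hΨnp]
    exact ⟨mem_Cn_conj_right _ _, mem_Cn_conj_right _ _⟩
  have := hVAC _ _ (consistent_neg_atom 0) hiff hq
  rw [hΨiff] at this
  exact atom_not_mem_Cn_iff_neg_atom zero_ne_one this
end
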